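/- Let J ⊆ S be such that W_J is finite, and let c ∈ W be a Coxeter-type element with supp(c) ∩ J = ∅. Set w = w_{0,J}·c and assume ℓ(w) = ℓ(w_{0,J}) + ℓ(c). Then the map sending each z ∈ [e, w] to the unique pair (u, v) with z = uv, u ≤ w_{0,J} and v ≤ c is an order isomorphism from the Bruhat interval [e, w] onto the product poset [e, w_{0,J}] × [e, c]. -/

import Mathlib

/-!
Statement 0. Let `(W, S)` be a Coxeter system. Let `J ⊆ S` be such that `W_J` is finite, and let
`c ∈ W` be a Coxeter-type element with `supp(c) ∩ J = ∅`. Set `w = w_{0,J} * c` and assume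
`ℓ(w) = ℓ(w_{0,J}) + ℓ(c)`. Then the map sending each `z ∈ [e, w]` to the unique pair `(u, v)`
with `z = u * v`, `u ≤ w_{0,J}`, `v ≤ c` is an order isomorphism
`[e, w] ≃ [e, w_{0,J}] × [e, c]`.
-/

variable {B W : Type*} [Group W] {M : CoxeterMatrix B}

/-- The Bruhat order on a Coxeter group, via the subword property: `u ≤ w` iff some reduced
word for `w` has a subword whose product is `u`. -/
def CoxeterSystem.bruhatLE (cs : CoxeterSystem M W) (u w : W) : Prop :=
  ∃ ω : List B, cs.IsReduced ω ∧ cs.wordProd ω = w ∧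
    ∃ l : List B, l.Sublist ω ∧ cs.wordProd l = u

/-- The support of `w`: the set of (indices of) simple reflections appearing in some
(equivalently, any) reduced expression of `w`. -/
def CoxeterSystem.support (cs : CoxeterSystem M W) (w : W) : Set B :=
  {i : B | ∃ ω : List B, cs.IsReduced ω ∧ cs.wordProd ω = w ∧ i ∈ ω}

/-- The standard parabolic subgroup `W_J` generated by the simple reflections indexed by `J`. -/
def CoxeterSystem.parabolic (cs : CoxeterSystem M W) (J : Set B) : Subgroup W :=
  Subgroup.closure (cs.simple '' J)

/-
Let `K` be the set of letters of a reduced word `γ` of `c`. As `supp(c) ∩ J = ∅`, the parabolic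
subgroups `W_J` and `W_K` meet trivially. Hence a reduced word of `u ∈ W_J` followed by a reduced
word of `v ∈ W_K` is again reduced (its right inversion sequence has no repetition), and
factorisations `u v` with `u ∈ W_J`, `v ∈ W_K` are unique. By the subword property, the elements
below `u v` are then exactly the products of a subword of the first word with a subword of the
second, which gives `[e, u v] ≅ [e, u] × [e, v]` as posets.

The subword property rests on the strong exchange condition, which comes from Tits' action of `W`
on `W × ℤ/2`: the parity of the number of occurrences of a reflection in the right inversion
sequence of a word depends only on the product of the word. Strong exchange then identifies the
subword definition of the Bruhat order with the chain definition.
-/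
namespace CoxeterSystem

open List Relation

variable (cs : CoxeterSystem M W)

local prefix:100 "s" => cs.simple
local prefix:100 "π" => cs.wordProd
local prefix:100 "ℓ" => cs.length
local prefix:100 "ris" => cs.rightInvSeq
local prefix:100 "lis" => cs.leftInvSeq

/-! ### Tits' representation and the strong exchange condition -/

theorem rightInvSeq_append (ω ω' : List B) :
    ris (ω ++ ω') = (ris ω).map (MulAut.conj (π ω')⁻¹) ++ ris ω' := by
  induction ω with
  | nil => simp
  | cons i ω ih =>
    simp only [cons_append, rightInvSeq, ih, map_cons, wordProd_append, MulAut.conj_apply,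
      mul_inv_rev, inv_inv]
    group

theorem leftInvSeq_eq_map_rightInvSeq (ω : List B) :
    lis ω = (ris ω).map (MulAut.conj (π ω)) := by
  induction ω with
  | nil => simp
  | cons i ω ih =>
    simp only [leftInvSeq, rightInvSeq, ih, map_cons, List.map_map, wordProd_cons,
      MulAut.conj_apply, mul_inv_rev, inv_simple]
    congr 1
    · simp [mul_assoc]
    · rw [map_mul]
      rfl

theorem reverse_alternatingWord_two_mul (i j : B) (m : ℕ) :
    (alternatingWord i j (2 * m)).reverse = alternatingWord j i (2 * m) := by
  induction m with
  | zero => rfl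
  | succ m ih =>
    rw [show 2 * (m + 1) = 2 * m + 1 + 1 by ring, alternatingWord_succ, alternatingWord_succ,
      alternatingWord_succ', alternatingWord_succ']
    simp [ih, Nat.not_even_bit1]

theorem leftInvSeq_alternatingWord_eq_append (i j : B) :
    lis (alternatingWord i j (2 * M i j)) =
      (lis (alternatingWord i j (2 * M i j))).take (M i j) ++
        (lis (alternatingWord i j (2 * M i j))).take (M i j) := by
  conv_lhs => rw [← take_append_drop (M i j) (lis (alternatingWord i j (2 * M i j)))]
  congr 1
  refine ext_getElem (by simp; omega) fun k hk _ => ?_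
  simp only [length_drop, length_leftInvSeq, length_alternatingWord] at hk
  rw [getElem_drop, getElem_take, getElem_leftInvSeq_alternatingWord _ _ _ _ _ (by omega),
    getElem_leftInvSeq_alternatingWord _ _ _ _ _ (by omega), prod_alternatingWord_eq_mul_pow,
    prod_alternatingWord_eq_mul_pow,
    show (2 * (M i j + k) + 1) / 2 = M i j + k by omega, show (2 * k + 1) / 2 = k by omega,
    pow_add, M.symmetric, simple_mul_simple_pow, one_mul]
  simp [parity_simps]

theorem prod_map_alternatingWord_two_mul {G : Type*} [Monoid G] (f : B → G) (i j : B) (n : ℕ) :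
    ((alternatingWord i j (2 * n)).map f).prod = (f i * f j) ^ n := by
  induction n with
  | zero => simp [alternatingWord]
  | succ n ih =>
    rw [show 2 * (n + 1) = 2 * n + 1 + 1 by ring, alternatingWord_succ', alternatingWord_succ']
    simp [Nat.not_even_bit1, ih, pow_succ', mul_assoc]

theorem wordProd_alternatingWord_two_mul (i j : B) :
    π (alternatingWord i j (2 * M i j)) = 1 := by
  simp [prod_alternatingWord_eq_mul_pow, simple_mul_simple_pow]

section Tits

variable [DecidableEq W]

/-- Tits' permutation of `W × ZMod 2` attached to `s i`; along a word, the second coordinate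
counts modulo 2 the occurrences of a reflection in the right inversion sequence. -/
def titsPerm (i : B) : Equiv.Perm (W × ZMod 2) :=
  Function.Involutive.toPerm (fun p => (s i * p.1 * s i, p.2 + if p.1 = s i then 1 else 0)) <| by
    rintro ⟨t, ε⟩
    have hfix : s i * t * s i = s i ↔ t = s i := by
      constructor
      · intro h
        simpa [mul_assoc] using congrArg (fun x => s i * x * s i) h
      · rintro rfl
        simp
    have hconj : s i * (s i * t * s i) * s i = t := by
      simp only [← mul_assoc, simple_mul_simple_self, one_mul, simple_mul_simple_cancel_right]
    simp only [hfix, hconj, Prod.mk.injEq, true_and]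
    split_ifs <;> simp [add_assoc, CharTwo.add_self_eq_zero]

theorem titsPerm_apply (i : B) (t : W) (ε : ZMod 2) :
    cs.titsPerm i (t, ε) = (s i * t * s i, ε + if t = s i then 1 else 0) := rfl

theorem prod_map_titsPerm_apply (ω : List B) (t : W) (ε : ZMod 2) :
    (ω.map cs.titsPerm).prod (t, ε) = (π ω * t * (π ω)⁻¹, ε + (ris ω).count t) := by
  induction ω with
  | nil => simp
  | cons i ω ih =>
    have hcond : π ω * t * (π ω)⁻¹ = s i ↔ (π ω)⁻¹ * s i * π ω = t := by
      constructor <;> intro h <;> rw [← h] <;> group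
    rw [map_cons, prod_cons, Equiv.Perm.mul_apply, ih, titsPerm_apply, rightInvSeq, count_cons,
      wordProd_cons]
    simp only [Prod.mk.injEq, hcond, beq_iff_eq, mul_inv_rev, inv_simple, Nat.cast_add]
    constructor
    · group
    · split_ifs <;> simp [add_assoc]

theorem even_count_rightInvSeq_alternatingWord (i j : B) (t : W) :
    Even ((ris (alternatingWord i j (2 * M i j))).count t) := by
  rw [← reverse_alternatingWord_two_mul, rightInvSeq_reverse, count_reverse, M.symmetric,
    leftInvSeq_alternatingWord_eq_append, count_append]
  exact Even.add_self _

theorem isLiftable_titsPerm : M.IsLiftable cs.titsPerm := by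
  intro i j
  ext ⟨t, ε⟩ : 1
  rw [← prod_map_alternatingWord_two_mul, prod_map_titsPerm_apply,
    wordProd_alternatingWord_two_mul, (ZMod.natCast_eq_zero_iff_even).2
      (cs.even_count_rightInvSeq_alternatingWord i j t)]
  simp

def titsRep : W →* Equiv.Perm (W × ZMod 2) := cs.lift ⟨cs.titsPerm, cs.isLiftable_titsPerm⟩

theorem titsRep_wordProd (ω : List B) : cs.titsRep (π ω) = (ω.map cs.titsPerm).prod := by
  rw [wordProd, map_list_prod, List.map_map]
  congr 1
  exact map_congr_left fun i _ => cs.lift_apply_simple cs.isLiftable_titsPerm i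

theorem cast_count_rightInvSeq_eq {ω ω' : List B} (h : π ω = π ω') (t : W) :
    ((ris ω).count t : ZMod 2) = (ris ω').count t := by
  have := congrArg (fun g => (cs.titsRep g (t, 0)).2) h
  simpa [titsRep_wordProd, prod_map_titsPerm_apply] using this


theorem count_map_conj (g x : W) (l : List W) :
    (l.map (MulAut.conj g)).count (g * x * g⁻¹) = l.count x :=
  count_map_of_injective l _ (MulAut.conj g).injective x

theorem count_rightInvSeq_palindrome (μ : List B) (i : B) :
    (ris (μ ++ i :: μ.reverse)).count (π μ * s i * (π μ)⁻¹) = 2 * (ris μ).count (s i) + 1 := by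
  have hπ : (π (i :: μ.reverse))⁻¹ = π μ * s i := by
    rw [wordProd_cons, wordProd_reverse, mul_inv_rev, inv_inv, inv_simple]
  have hleft : ((ris μ).map (MulAut.conj (π (i :: μ.reverse))⁻¹)).count (π μ * s i * (π μ)⁻¹) =
      (ris μ).count (s i) := by
    rw [hπ, show π μ * s i * (π μ)⁻¹ = π μ * s i * s i * (π μ * s i)⁻¹ by group, count_map_conj]
  have hright : (ris (i :: μ.reverse)).count (π μ * s i * (π μ)⁻¹) = (ris μ).count (s i) + 1 := by
    rw [rightInvSeq, count_cons, rightInvSeq_reverse, count_reverse, leftInvSeq_eq_map_rightInvSeq,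
      count_map_conj, wordProd_reverse, inv_inv]
    simp
  rw [rightInvSeq_append, count_append, hleft, hright]
  ring

end Tits

theorem mem_rightInvSeq_of_isRightInversion {ω : List B} {t : W}
    (h : cs.IsRightInversion (π ω) t) : t ∈ ris ω := by
  classical
  obtain ⟨ht, hlt⟩ := h
  have htt : t * t = 1 := ht.mul_self
  obtain ⟨q, i, hq⟩ := ht
  obtain ⟨μ, rfl⟩ := cs.wordProd_surjective q
  obtain ⟨ψ, hψ, hψπ⟩ := cs.exists_isReduced (π ω * t)
  have hnotψ : t ∉ ris ψ := fun hmem => by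
    have := (cs.isRightInversion_of_mem_rightInvSeq hψ hmem).2
    rw [← hψπ, mul_assoc, htt, mul_one] at this
    omega
  have hρ : π (μ ++ i :: μ.reverse) = t := by
    rw [hq, wordProd_append, wordProd_cons, wordProd_reverse, mul_assoc]
  -- `ω` and `ψ ++ μ i μ⁻¹` have the same product, but if `t ∉ ris ω` then `t` occurs an even
  -- number of times in the first right inversion sequence and an odd number in the second
  have hπ : π ω = π (ψ ++ (μ ++ i :: μ.reverse)) := by
    rw [wordProd_append, ← hψπ, hρ, mul_assoc, htt, mul_one]
  have hcount : (ris (ψ ++ (μ ++ i :: μ.reverse))).count t = 2 * (ris μ).count (s i) + 1 := by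
    have hfix : ((ris ψ).map (MulAut.conj t⁻¹)).count t = (ris ψ).count t := by
      simpa using count_map_conj t⁻¹ t (ris ψ)
    rw [rightInvSeq_append, count_append, hρ, hfix, count_eq_zero.2 hnotψ, zero_add, hq,
      count_rightInvSeq_palindrome]
  by_contra hnot
  have hparity := cs.cast_count_rightInvSeq_eq hπ t
  rw [count_eq_zero.2 hnot, hcount, Nat.cast_zero, eq_comm,
    ZMod.natCast_eq_zero_iff_even] at hparity
  simp [parity_simps] at hparity

theorem exists_eraseIdx_of_mem_rightInvSeq {ω : List B} {t : W} (h : t ∈ ris ω) :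
    ∃ j < ω.length, π ω * t = π (ω.eraseIdx j) := by
  obtain ⟨j, hj, rfl⟩ := List.mem_iff_getElem.mp h
  rw [length_rightInvSeq] at hj
  refine ⟨j, hj, ?_⟩
  rw [← List.getD_eq_getElem _ 1, wordProd_mul_getD_rightInvSeq]

theorem exists_reduced_sublist (ω : List B) : ∃ l, l <+ ω ∧ cs.IsReduced l ∧ π l = π ω := by
  induction ω using List.reverseRecOn with
  | nil => exact ⟨[], Sublist.refl _, by simp [IsReduced], rfl⟩
  | append_singleton ω a ih =>
    obtain ⟨l, hl, hred, hπ⟩ := ih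
    have hπa : π (ω ++ [a]) = π l * s a := by rw [wordProd_append, wordProd_singleton, hπ]
    rcases cs.length_mul_simple (π l) a with hup | hdown
    · refine ⟨l ++ [a], hl.append (Sublist.refl _), ?_, by rw [hπa, wordProd_append,
        wordProd_singleton]⟩
      rw [IsReduced, wordProd_append, wordProd_singleton, hup, hred, length_append,
        length_singleton]
    · obtain ⟨j, hj, he⟩ := cs.exists_eraseIdx_of_mem_rightInvSeq
        (cs.mem_rightInvSeq_of_isRightInversion (ω := l) ⟨cs.isReflection_simple a, by omega⟩)
      refine ⟨l.eraseIdx j, (eraseIdx_sublist l j).trans (hl.trans (sublist_append_left ω [a])),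
        ?_, by rw [← he, hπa]⟩
      rw [IsReduced, ← he, length_eraseIdx_of_lt hj, ← hred]
      omega

theorem isReduced_of_nodup_rightInvSeq {ω : List B} (h : (ris ω).Nodup) : cs.IsReduced ω := by
  induction ω with
  | nil => simp [IsReduced]
  | cons a ω ih =>
    rw [rightInvSeq, nodup_cons] at h
    have hω : cs.IsReduced ω := ih h.2
    rcases cs.length_simple_mul (π ω) a with hup | hdown
    · rw [IsReduced, wordProd_cons, hup, hω, length_cons]
    · refine absurd (cs.mem_rightInvSeq_of_isRightInversion ⟨?_, ?_⟩) h.1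
      · exact cs.isReflection_of_mem_rightInvSeq (a :: ω) mem_cons_self
      · rw [show π ω * ((π ω)⁻¹ * s a * π ω) = s a * π ω by group]
        omega

/-! ### The subword property -/

def BruhatStep (u v : W) : Prop := ∃ t, cs.IsReflection t ∧ u * t = v ∧ ℓ u < ℓ v

/-- The order generated by `BruhatStep`; by the subword property it is the Bruhat order. -/
abbrev BruhatChain : W → W → Prop := ReflTransGen cs.BruhatStep

theorem isReflection_simple_mul_mul_simple {t : W} (ht : cs.IsReflection t) (a : B) :
    cs.IsReflection (s a * t * s a) := by
  simpa [inv_simple] using ht.conj (s a)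

theorem bruhatStep_mul_simple {w : W} {a : B} (h : ℓ w < ℓ (w * s a)) :
    cs.BruhatStep w (w * s a) :=
  ⟨s a, cs.isReflection_simple a, rfl, h⟩

theorem bruhatStep_mul_simple_mul_simple {v y : W} {a : B} (h : cs.BruhatStep v y)
    (hy : ℓ y < ℓ (y * s a)) : cs.BruhatStep (v * s a) (y * s a) := by
  obtain ⟨t, ht, rfl, hlt⟩ := h
  refine ⟨s a * t * s a, cs.isReflection_simple_mul_mul_simple ht a, by simp [mul_assoc], ?_⟩
  have := cs.length_mul_le v (s a)
  rw [length_simple] at this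
  rcases cs.length_mul_simple (v * t) a with h | h <;> omega

theorem bruhatChain_mul_simple_of_bruhatStep {v y : W} {a : B} (h : cs.BruhatStep v y)
    (hy : ℓ (y * s a) < ℓ y) : cs.BruhatChain (v * s a) y := by
  obtain ⟨t, ht, rfl, hlt⟩ := h
  obtain ⟨ζ, hζ, hζπ⟩ := cs.exists_isReduced (v * t * s a)
  have hπ : π (ζ ++ [a]) = v * t := by simp [wordProd_append, ← hζπ, mul_assoc]
  obtain ⟨j, hj, hjπ⟩ := cs.exists_eraseIdx_of_mem_rightInvSeq
    (cs.mem_rightInvSeq_of_isRightInversion (ω := ζ ++ [a])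
      ⟨ht, by rwa [hπ, mul_assoc, ht.mul_self, mul_one]⟩)
  rw [hπ, mul_assoc, ht.mul_self, mul_one] at hjπ
  rw [length_append, length_singleton] at hj
  rcases Nat.lt_succ_iff_lt_or_eq.mp hj with hj | rfl
  · -- `v s` arises from `v t s` by deleting a letter, so `v s → v t s → v t`
    rw [eraseIdx_append_of_lt_length hj, wordProd_append, wordProd_singleton] at hjπ
    have hvs : v * s a = π (ζ.eraseIdx j) := by rw [hjπ, simple_mul_simple_cancel_right]
    have hys := cs.bruhatStep_mul_simple (w := v * t * s a) (a := a)
      (by rw [simple_mul_simple_cancel_right]; omega)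
    rw [simple_mul_simple_cancel_right] at hys
    refine ReflTransGen.single hys |>.head ⟨s a * t * s a,
      cs.isReflection_simple_mul_mul_simple ht a, by simp [mul_assoc], ?_⟩
    have := cs.length_wordProd_le (ζ.eraseIdx j)
    rw [length_eraseIdx_of_lt hj] at this
    rw [hvs, hζπ, hζ]
    omega
  · -- here `v = v t s`
    rw [eraseIdx_append_of_length_le le_rfl, Nat.sub_self, eraseIdx_cons_zero, append_nil] at hjπ
    have hvs : v * s a = v * t := by
      conv_lhs => rw [hjπ, ← hζπ, simple_mul_simple_cancel_right]
    rw [hvs]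

theorem bruhatChain_mul_simple {x y : W} (h : cs.BruhatChain x y) (a : B) :
    (ℓ y < ℓ (y * s a) → cs.BruhatChain (x * s a) (y * s a)) ∧
      (ℓ (y * s a) < ℓ y → cs.BruhatChain (x * s a) y) := by
  induction h with
  | refl =>
    refine ⟨fun _ => ReflTransGen.refl, fun hxa => ReflTransGen.single ?_⟩
    simpa using cs.bruhatStep_mul_simple (w := x * s a) (a := a) (by simpa using hxa)
  | @tail v y _ hstep ih =>
    rcases lt_or_gt_of_ne (cs.length_mul_simple_ne v a) with hv | hv
    · exact ⟨fun hy => ((ih.2 hv).tail hstep).tail (cs.bruhatStep_mul_simple hy),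
        fun _ => (ih.2 hv).tail hstep⟩
    · exact ⟨fun hy => (ih.1 hv).tail (cs.bruhatStep_mul_simple_mul_simple hstep hy),
        fun hy => (ih.1 hv).trans (cs.bruhatChain_mul_simple_of_bruhatStep hstep hy)⟩

theorem bruhatChain_of_sublist {l ω : List B} (hl : l <+ ω) (hω : cs.IsReduced ω) :
    cs.BruhatChain (π l) (π ω) := by
  induction ω using List.reverseRecOn generalizing l with
  | nil => rw [sublist_nil.mp hl]
  | append_singleton ω a ih =>
    have hω' : cs.IsReduced ω := by simpa using hω.take ω.length
    have hup : ℓ (π ω) < ℓ (π ω * s a) := by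
      have := hω.eq
      rw [wordProd_append, wordProd_singleton, length_append, length_singleton, ← hω'.eq] at this
      omega
    obtain ⟨l₁, l₂, rfl, hl₁, hl₂⟩ := sublist_append_iff.mp hl
    rcases sublist_singleton.mp hl₂ with rfl | rfl
    · simpa [wordProd_append] using (ih hl₁ hω').tail (cs.bruhatStep_mul_simple hup)
    · simpa [wordProd_append] using (cs.bruhatChain_mul_simple (ih hl₁ hω') a).1 hup

theorem exists_sublist_of_bruhatChain {x y : W} (h : cs.BruhatChain x y) {ω : List B}
    (hω : cs.IsReduced ω) (hπ : π ω = y) : ∃ l, l <+ ω ∧ cs.IsReduced l ∧ π l = x := by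
  induction h generalizing ω with
  | refl => exact ⟨ω, Sublist.refl _, hω, hπ⟩
  | tail _ hstep ih =>
    obtain ⟨t, ht, rfl, hlt⟩ := hstep
    obtain ⟨j, -, hj⟩ := cs.exists_eraseIdx_of_mem_rightInvSeq
      (cs.mem_rightInvSeq_of_isRightInversion ⟨ht, by rwa [hπ, mul_assoc, ht.mul_self, mul_one]⟩)
    obtain ⟨l₀, hl₀, hred₀, hπ₀⟩ := cs.exists_reduced_sublist (ω.eraseIdx j)
    obtain ⟨l, hl, hred, hπl⟩ := ih hred₀ (by rw [hπ₀, ← hj, hπ, mul_assoc, ht.mul_self, mul_one])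
    exact ⟨l, hl.trans (hl₀.trans (eraseIdx_sublist ω j)), hred, hπl⟩

/-- The subword property: a Bruhat-smaller element is a subword of *every* reduced word. -/
theorem exists_sublist_of_bruhatLE {u w : W} (h : cs.bruhatLE u w) {ω : List B}
    (hω : cs.IsReduced ω) (hπ : π ω = w) : ∃ l, l <+ ω ∧ cs.IsReduced l ∧ π l = u := by
  obtain ⟨ω', hω', rfl, l', hl', rfl⟩ := h
  exact cs.exists_sublist_of_bruhatChain (cs.bruhatChain_of_sublist hl' hω') hω hπ

/-! ### Parabolic subgroups -/

theorem wordProd_mem_parabolic {A : Set B} {ω : List B} (h : ∀ b ∈ ω, b ∈ A) :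
    π ω ∈ cs.parabolic A := by
  induction ω with
  | nil => exact one_mem _
  | cons i ω ih =>
    rw [wordProd_cons]
    exact mul_mem (Subgroup.subset_closure ⟨i, h i mem_cons_self, rfl⟩)
      (ih fun b hb => h b (mem_cons_of_mem i hb))

theorem exists_reduced_word_of_mem_parabolic {A : Set B} {g : W} (h : g ∈ cs.parabolic A) :
    ∃ ω, cs.IsReduced ω ∧ (∀ b ∈ ω, b ∈ A) ∧ π ω = g := by
  suffices ∃ ω : List B, (∀ b ∈ ω, b ∈ A) ∧ π ω = g by
    obtain ⟨ω, hA, rfl⟩ := this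
    obtain ⟨l, hl, hred, hπ⟩ := cs.exists_reduced_sublist ω
    exact ⟨l, hred, fun b hb => hA b (hl.subset hb), hπ⟩
  induction h using Subgroup.closure_induction with
  | mem x hx =>
    obtain ⟨i, hi, rfl⟩ := hx
    exact ⟨[i], by simpa using hi, wordProd_singleton cs i⟩
  | one => exact ⟨[], by simp, rfl⟩
  | mul x y _ _ hx hy =>
    obtain ⟨ω₁, h₁, rfl⟩ := hx
    obtain ⟨ω₂, h₂, rfl⟩ := hy
    exact ⟨ω₁ ++ ω₂, by simpa [or_imp, forall_and] using And.intro h₁ h₂, wordProd_append cs _ _⟩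
  | inv x _ hx =>
    obtain ⟨ω, hA, rfl⟩ := hx
    exact ⟨ω.reverse, by simpa using hA, wordProd_reverse cs ω⟩

theorem mem_parabolic_of_mem_rightInvSeq {A : Set B} {ω : List B} (h : ∀ b ∈ ω, b ∈ A) {t : W}
    (ht : t ∈ ris ω) : t ∈ cs.parabolic A := by
  induction ω with
  | nil => simp at ht
  | cons i ω ih =>
    have hω : π ω ∈ cs.parabolic A :=
      cs.wordProd_mem_parabolic fun b hb => h b (mem_cons_of_mem i hb)
    rcases mem_cons.mp ht with rfl | ht
    · exact mul_mem (mul_mem (inv_mem hω) (Subgroup.subset_closure ⟨i, h i mem_cons_self, rfl⟩)) hω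
    · exact ih (fun b hb => h b (mem_cons_of_mem i hb)) ht

theorem exists_simple_eq_of_simple_mem_parabolic {A : Set B} {i : B}
    (h : s i ∈ cs.parabolic A) : ∃ a ∈ A, s a = s i := by
  obtain ⟨ω, hred, hA, hπ⟩ := cs.exists_reduced_word_of_mem_parabolic h
  have : ω.length = 1 := by rw [← hred.eq, hπ, length_simple]
  obtain ⟨a, rfl⟩ := List.length_eq_one_iff.mp this
  exact ⟨a, hA a (mem_singleton_self a), by simpa using hπ⟩

theorem disjoint_parabolic_of_simple_ne {J K : Set B} (h : ∀ j ∈ J, ∀ k ∈ K, s j ≠ s k) :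
    Disjoint (cs.parabolic J) (cs.parabolic K) := by
  rw [Subgroup.disjoint_def]
  intro g hJ hK
  by_contra hg
  obtain ⟨i, hi⟩ := cs.exists_rightDescent_of_ne_one hg
  -- a right descent `s i` of `g` occurs in the right inversion sequence of every word for `g`
  have hmem : ∀ {A : Set B}, g ∈ cs.parabolic A → s i ∈ cs.parabolic A := fun hA => by
    obtain ⟨ω, -, hωA, rfl⟩ := cs.exists_reduced_word_of_mem_parabolic hA
    exact cs.mem_parabolic_of_mem_rightInvSeq hωA
      (cs.mem_rightInvSeq_of_isRightInversion ⟨cs.isReflection_simple i, hi⟩)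
  obtain ⟨j, hj, hji⟩ := cs.exists_simple_eq_of_simple_mem_parabolic (hmem hJ)
  obtain ⟨k, hk, hki⟩ := cs.exists_simple_eq_of_simple_mem_parabolic (hmem hK)
  exact h j hj k hk (hji.trans hki.symm)

theorem mem_support_of_simple_eq {γ : List B} (hγ : cs.IsReduced γ) {j b : B} (hb : b ∈ γ)
    (h : s j = s b) : j ∈ cs.support (π γ) := by
  obtain ⟨α, β, rfl⟩ := append_of_mem hb
  have hπ : π (α ++ j :: β) = π (α ++ b :: β) := by simp [wordProd_append, wordProd_cons, h]
  refine ⟨α ++ j :: β, ?_, hπ, by simp⟩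
  rw [IsReduced, hπ, hγ.eq]
  simp

theorem mem_parabolic_of_bruhatLE {A : Set B} {u w : W} (h : cs.bruhatLE u w)
    (hw : w ∈ cs.parabolic A) : u ∈ cs.parabolic A := by
  obtain ⟨ω, hω, hA, rfl⟩ := cs.exists_reduced_word_of_mem_parabolic hw
  obtain ⟨l, hl, -, rfl⟩ := cs.exists_sublist_of_bruhatLE h hω rfl
  exact cs.wordProd_mem_parabolic fun b hb => hA b (hl.subset hb)

section Disjoint

variable {cs} {J K : Set B} (hJK : Disjoint (cs.parabolic J) (cs.parabolic K))
include hJK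

theorem isReduced_append_of_disjoint {ρ γ : List B} (hρ : cs.IsReduced ρ) (hρJ : ∀ b ∈ ρ, b ∈ J)
    (hγ : cs.IsReduced γ) (hγK : ∀ b ∈ γ, b ∈ K) : cs.IsReduced (ρ ++ γ) := by
  apply cs.isReduced_of_nodup_rightInvSeq
  rw [rightInvSeq_append]
  refine (hρ.nodup_rightInvSeq.map (MulAut.conj _).injective).append hγ.nodup_rightInvSeq ?_
  intro x hx₁ hx₂
  obtain ⟨y, hy, rfl⟩ := mem_map.mp hx₁
  have hγW : π γ ∈ cs.parabolic K := cs.wordProd_mem_parabolic hγK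
  have hyK : y ∈ cs.parabolic K := by
    have := mul_mem (mul_mem hγW (cs.mem_parabolic_of_mem_rightInvSeq hγK hx₂)) (inv_mem hγW)
    simpa [mul_assoc] using this
  have hy1 := Subgroup.disjoint_def.mp hJK (cs.mem_parabolic_of_mem_rightInvSeq hρJ hy) hyK
  have := (cs.isReflection_of_mem_rightInvSeq ρ hy).odd_length
  simp [hy1] at this

theorem bruhatLE_mul_mul {u v x y : W} (hu : cs.bruhatLE u x) (hv : cs.bruhatLE v y)
    (hx : x ∈ cs.parabolic J) (hy : y ∈ cs.parabolic K) : cs.bruhatLE (u * v) (x * y) := by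
  obtain ⟨ρ, hρ, hρJ, rfl⟩ := cs.exists_reduced_word_of_mem_parabolic hx
  obtain ⟨γ, hγ, hγK, rfl⟩ := cs.exists_reduced_word_of_mem_parabolic hy
  obtain ⟨l₁, hl₁, -, rfl⟩ := cs.exists_sublist_of_bruhatLE hu hρ rfl
  obtain ⟨l₂, hl₂, -, rfl⟩ := cs.exists_sublist_of_bruhatLE hv hγ rfl
  exact ⟨ρ ++ γ, isReduced_append_of_disjoint hJK hρ hρJ hγ hγK, wordProd_append cs _ _,
    l₁ ++ l₂, hl₁.append hl₂, wordProd_append cs _ _⟩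

theorem exists_mul_eq_of_bruhatLE_mul {x y z : W} (hx : x ∈ cs.parabolic J)
    (hy : y ∈ cs.parabolic K) (hz : cs.bruhatLE z (x * y)) :
    ∃ u v, cs.bruhatLE u x ∧ cs.bruhatLE v y ∧ u * v = z := by
  obtain ⟨ρ, hρ, hρJ, rfl⟩ := cs.exists_reduced_word_of_mem_parabolic hx
  obtain ⟨γ, hγ, hγK, rfl⟩ := cs.exists_reduced_word_of_mem_parabolic hy
  obtain ⟨l, hl, -, rfl⟩ := cs.exists_sublist_of_bruhatLE hz
    (isReduced_append_of_disjoint hJK hρ hρJ hγ hγK) (wordProd_append cs _ _)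
  obtain ⟨l₁, l₂, rfl, hl₁, hl₂⟩ := sublist_append_iff.mp hl
  exact ⟨π l₁, π l₂, ⟨ρ, hρ, rfl, l₁, hl₁, rfl⟩, ⟨γ, hγ, rfl, l₂, hl₂, rfl⟩,
    (wordProd_append cs _ _).symm⟩

theorem eq_and_eq_of_mul_eq_mul {u u' v v' : W} (hu : u ∈ cs.parabolic J)
    (hu' : u' ∈ cs.parabolic J) (hv : v ∈ cs.parabolic K) (hv' : v' ∈ cs.parabolic K)
    (h : u * v = u' * v') : u = u' ∧ v = v' := by
  simpa using Subgroup.mul_injective_of_disjoint hJK (a₁ := (⟨u, hu⟩, ⟨v, hv⟩))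
    (a₂ := (⟨u', hu'⟩, ⟨v', hv'⟩)) h

theorem bruhatLE_mul_mul_iff {u u' v v' : W} (hu : u ∈ cs.parabolic J)
    (hu' : u' ∈ cs.parabolic J) (hv : v ∈ cs.parabolic K) (hv' : v' ∈ cs.parabolic K) :
    cs.bruhatLE (u * v) (u' * v') ↔ cs.bruhatLE u u' ∧ cs.bruhatLE v v' := by
  refine ⟨fun h => ?_, fun h => bruhatLE_mul_mul hJK h.1 h.2 hu' hv'⟩
  obtain ⟨u₀, v₀, hu₀, hv₀, huv⟩ := exists_mul_eq_of_bruhatLE_mul hJK hu' hv' h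
  obtain ⟨rfl, rfl⟩ := eq_and_eq_of_mul_eq_mul hJK (cs.mem_parabolic_of_bruhatLE hu₀ hu') hu
    (cs.mem_parabolic_of_bruhatLE hv₀ hv') hv huv
  exact ⟨hu₀, hv₀⟩

noncomputable def bruhatIntervalMulEquiv {x y : W} (hx : x ∈ cs.parabolic J)
    (hy : y ∈ cs.parabolic K) :
    {u // cs.bruhatLE u x} × {v // cs.bruhatLE v y} ≃ {z // cs.bruhatLE z (x * y)} :=
  Equiv.ofBijective (fun p => ⟨p.1 * p.2, bruhatLE_mul_mul hJK p.1.2 p.2.2 hx hy⟩) <| by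
    refine ⟨fun ⟨⟨u, hu⟩, ⟨v, hv⟩⟩ ⟨⟨u', hu'⟩, ⟨v', hv'⟩⟩ h => ?_, fun ⟨z, hz⟩ => ?_⟩
    · obtain ⟨rfl, rfl⟩ := eq_and_eq_of_mul_eq_mul hJK (cs.mem_parabolic_of_bruhatLE hu hx)
        (cs.mem_parabolic_of_bruhatLE hu' hx) (cs.mem_parabolic_of_bruhatLE hv hy)
        (cs.mem_parabolic_of_bruhatLE hv' hy) (congrArg Subtype.val h)
      rfl
    · obtain ⟨u, v, hu, hv, rfl⟩ := exists_mul_eq_of_bruhatLE_mul hJK hx hy hz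
      exact ⟨(⟨u, hu⟩, ⟨v, hv⟩), rfl⟩

end Disjoint

end CoxeterSystem

theorem bruhat_interval_iso_of_horospherical_general
    (cs : CoxeterSystem M W) (J : Set B)
    (w0J : W) (hw0J : w0J ∈ cs.parabolic J)
    (c : W)
    (hdisj : cs.support c ∩ J = ∅)
    (w : W) (hw : w = w0J * c) :
    ∃ f : {z : W // cs.bruhatLE z w} ≃
        {u : W // cs.bruhatLE u w0J} × {v : W // cs.bruhatLE v c},
      (∀ z : {z : W // cs.bruhatLE z w}, (z : W) = ((f z).1 : W) * ((f z).2 : W)) ∧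
      (∀ (z : {z : W // cs.bruhatLE z w}) (u v : W),
        cs.bruhatLE u w0J → cs.bruhatLE v c → (z : W) = u * v →
          u = ((f z).1 : W) ∧ v = ((f z).2 : W)) ∧
      (∀ z z' : {z : W // cs.bruhatLE z w},
        cs.bruhatLE (z : W) (z' : W) ↔
          cs.bruhatLE ((f z).1 : W) ((f z').1 : W) ∧
          cs.bruhatLE ((f z).2 : W) ((f z').2 : W)) := by
  subst hw
  obtain ⟨γ, hγ, rfl⟩ := cs.exists_isReduced c
  have hJK : Disjoint (cs.parabolic J) (cs.parabolic {b | b ∈ γ}) :=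
    cs.disjoint_parabolic_of_simple_ne fun j hj b hb hjb =>
      (Set.eq_empty_iff_forall_notMem.mp hdisj) j ⟨cs.mem_support_of_simple_eq hγ hb hjb, hj⟩
  have hγK : cs.wordProd γ ∈ cs.parabolic {b | b ∈ γ} := cs.wordProd_mem_parabolic fun _ hb => hb
  set e := CoxeterSystem.bruhatIntervalMulEquiv hJK hw0J hγK
  have he : ∀ z : {z // cs.bruhatLE z (w0J * cs.wordProd γ)},
      (z : W) = ((e.symm z).1 : W) * ((e.symm z).2 : W) := fun z =>
    congrArg Subtype.val (e.apply_symm_apply z).symm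
  refine ⟨e.symm, he, fun z u v hu hv hz => ?_, fun z z' => ?_⟩
  · rw [e.symm_apply_eq.mpr (Subtype.ext hz : z = e (⟨u, hu⟩, ⟨v, hv⟩))]
    exact ⟨rfl, rfl⟩
  · have hJ := fun (z : {z // cs.bruhatLE z (w0J * cs.wordProd γ)}) =>
      cs.mem_parabolic_of_bruhatLE (e.symm z).1.2 hw0J
    have hK := fun (z : {z // cs.bruhatLE z (w0J * cs.wordProd γ)}) =>
      cs.mem_parabolic_of_bruhatLE (e.symm z).2.2 hγK
    rw [he z, he z', CoxeterSystem.bruhatLE_mul_mul_iff hJK (hJ z) (hJ z') (hK z) (hK z')]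

theorem bruhat_interval_iso_of_horospherical
    (cs : CoxeterSystem M W) (J : Set B)
    (hfin : Finite (cs.parabolic J))
    (w0J : W) (hw0J : w0J ∈ cs.parabolic J)
    (hw0Jmax : ∀ u ∈ cs.parabolic J, cs.length u ≤ cs.length w0J)
    (c : W) (hc : ∃ l : List B, l.Nodup ∧ cs.wordProd l = c)
    (hdisj : cs.support c ∩ J = ∅)
    (w : W) (hw : w = w0J * c)
    (hlen : cs.length w = cs.length w0J + cs.length c) :
    ∃ f : {z : W // cs.bruhatLE z w} ≃
        {u : W // cs.bruhatLE u w0J} × {v : W // cs.bruhatLE v c},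
      (∀ z : {z : W // cs.bruhatLE z w}, (z : W) = ((f z).1 : W) * ((f z).2 : W)) ∧
      (∀ (z : {z : W // cs.bruhatLE z w}) (u v : W),
        cs.bruhatLE u w0J → cs.bruhatLE v c → (z : W) = u * v →
          u = ((f z).1 : W) ∧ v = ((f z).2 : W)) ∧
      (∀ z z' : {z : W // cs.bruhatLE z w},
        cs.bruhatLE (z : W) (z' : W) ↔
          cs.bruhatLE ((f z).1 : W) ((f z').1 : W) ∧
          cs.bruhatLE ((f z).2 : W) ((f z').2 : W)) :=
  bruhat_interval_iso_of_horospherical_general cs J w0J hw0J c hdisj w hw
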